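/- arXiv:math/0005260 — 6 statements merged into one kernel-verified Lean document; each statement's English description precedes it below -/
import Mathlib

section
/- A finite sequence of distinct integers has no strictly increasing subsequence of length t if and only if it can be decomposed (partitioned) into t−1 strictly decreasing subsequences. -/
/-!
Order the positions of `b` by `i ≺ j ↔ i < j ∧ bᵢ < bⱼ`, realised as the graph `{(i, bᵢ)}` with
the product order. Its chains are the increasing subsequences and, since the entries are distinct,
its antichains are the decreasing ones. If there is no chain of `t` points, colouring each point
by its height (the length of the longest chain ending at it) uses `t - 1` colours and is strictly
monotone, so every colour class is an antichain. Conversely, by pigeonhole two of `t` increasing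
positions share a colour, which is impossible for a colouring by decreasing classes.
-/

theorem Order.exists_strictMono_fin_of_forall_not_strictMono {P : Type*} [Preorder P] {m : ℕ}
    (h : ∀ φ : Fin (m + 1) → P, ¬ StrictMono φ) : ∃ f : P → Fin m, StrictMono f := by
  have height_eq : ∀ a : P, ∃ k : Fin m, height a = k := fun a => by
    have hlt : height a < m := lt_of_not_ge fun hle => by
      obtain ⟨p, -, rfl⟩ := exists_series_of_le_height a hle
      exact h p p.strictMono
    obtain ⟨k, hk⟩ := ENat.ne_top_iff_exists.mp (hlt.trans (ENat.natCast_lt_top m)).ne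
    exact ⟨⟨k, by rw [← hk] at hlt; exact_mod_cast hlt⟩, hk.symm⟩
  choose f hf using height_eq
  refine ⟨f, fun a b hab => ?_⟩
  have := height_strictMono hab ((hf a).trans_lt (ENat.natCast_lt_top _))
  rw [hf a, hf b] at this
  exact_mod_cast this

section
variable {ι α : Type*}

theorem Function.graph_lt_iff [PartialOrder ι] [PartialOrder α] {g : ι → α} (hg : g.Injective)
    {q r : g.graph} : q < r ↔ q.1.1 < r.1.1 ∧ g q.1.1 < g r.1.1 := by
  obtain ⟨⟨i, _⟩, rfl⟩ := q
  obtain ⟨⟨j, _⟩, rfl⟩ := r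
  change (i, g i) < (j, g j) ↔ i < j ∧ g i < g j
  rw [Prod.lt_iff]
  constructor
  · rintro (⟨hij, hg_le⟩ | ⟨hij, hg_lt⟩)
    · exact ⟨hij, hg_le.lt_of_ne (hg.ne hij.ne)⟩
    · exact ⟨hij.lt_of_ne fun h => hg_lt.ne (congrArg g h), hg_lt⟩
  · exact fun ⟨hij, hg_lt⟩ => Or.inl ⟨hij, hg_lt.le⟩

theorem exists_coloring_of_forall_not_strictMono_comp [PartialOrder ι] [LinearOrder α]
    {g : ι → α} (hg : g.Injective) {m : ℕ} (h : ∀ e : Fin (m + 1) ↪o ι, ¬ StrictMono (g ∘ e)) :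
    ∃ f : ι → Fin m, ∀ i j, i < j → f i = f j → g j < g i := by
  have no_long_chain : ∀ φ : Fin (m + 1) → g.graph, ¬ StrictMono φ := fun φ hφ => by
    have hlt := fun {a b} (hab : a < b) => (Function.graph_lt_iff hg).mp (hφ hab)
    exact h (OrderEmbedding.ofStrictMono _ fun _ _ hab => (hlt hab).1) fun _ _ hab => (hlt hab).2
  obtain ⟨c, hc⟩ := Order.exists_strictMono_fin_of_forall_not_strictMono no_long_chain
  refine ⟨fun i => c ⟨(i, g i), rfl⟩, fun i j hij hcij => ?_⟩
  have hnlt : ¬ g i < g j := fun hlt => (hc ((Function.graph_lt_iff hg).mpr ⟨hij, hlt⟩)).ne hcij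
  exact (not_lt.mp hnlt).lt_of_ne (hg.ne hij.ne')

theorem not_strictMono_comp_of_coloring [Preorder ι] [Preorder α] {g : ι → α} {m t : ℕ}
    {f : ι → Fin m} (hf : ∀ i j, i < j → f i = f j → g j < g i) (hmt : m < t) (e : Fin t ↪o ι) :
    ¬ StrictMono (g ∘ e) := by
  intro he
  obtain ⟨x, y, hxy, hfxy⟩ := Fintype.exists_ne_map_eq_of_card_lt (f ∘ e) (by simpa)
  rcases hxy.lt_or_gt with hlt | hgt
  · exact (he hlt).asymm (hf _ _ (e.strictMono hlt) hfxy)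
  · exact (he hgt).asymm (hf _ _ (e.strictMono hgt) hfxy.symm)

theorem List.exists_sublist_isChain_lt_iff [Preorder α] {b : List α} {t : ℕ} :
    (∃ s : List α, s.Sublist b ∧ s.IsChain (· < ·) ∧ s.length = t) ↔
      ∃ e : Fin t ↪o Fin b.length, StrictMono (b.get ∘ e) := by
  constructor
  · rintro ⟨s, hsub, hchain, rfl⟩
    obtain ⟨e, he⟩ := sublist_iff_exists_fin_orderEmbedding_get_eq.mp hsub
    have hcomp : b.get ∘ e = s.get := funext fun i => (he i).symm
    exact ⟨e, hcomp ▸ sortedLT_iff_isChain.mpr hchain⟩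
  · rintro ⟨e, he⟩
    refine ⟨ofFn (b.get ∘ e), sublist_iff_exists_fin_orderEmbedding_get_eq.mpr
      ⟨(Fin.castOrderIso length_ofFn).toOrderEmbedding.trans e, fun _ => get_ofFn _ _⟩,
      sortedLT_iff_isChain.mp he.sortedLT_ofFn, length_ofFn⟩

end

/-- A finite sequence of distinct integers has no strictly increasing
subsequence of length `t` iff its index set can be partitioned into `t − 1`
classes each of which indexes a strictly decreasing subsequence. -/
theorem no_inc_iff_decomp_into_decreasing (t : ℕ) (ht : 1 ≤ t)
    (b : List ℤ) (hb : b.Nodup) :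
    (¬ ∃ s : List ℤ, s.Sublist b ∧ s.Chain' (· < ·) ∧ s.length = t) ↔
    ∃ f : Fin b.length → Fin (t - 1),
      ∀ i j : Fin b.length, i < j → f i = f j → b.get j < b.get i := by
  obtain ⟨m, rfl⟩ : ∃ m, t = m + 1 := ⟨t - 1, by omega⟩
  rw [Nat.add_sub_cancel]
  refine (List.exists_sublist_isChain_lt_iff.not.trans not_exists).trans ⟨?_, ?_⟩
  · exact exists_coloring_of_forall_not_strictMono_comp (List.nodup_iff_injective_get.mp hb)
  · exact fun ⟨_, hf⟩ => not_strictMono_comp_of_coloring hf m.lt_succ_self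
end

section
/- Schensted's theorem: for a finite sequence b of distinct integers, the length of the first row of the RSK insertion tableau P(b) equals the maximal length of a strictly increasing subsequence of b. -/
/-!
The first row of `P(b)` is built by patience sorting: its `n`-th entry is always the least last
entry of a strictly increasing subsequence of length `n + 1` of the letters inserted so far, and
the row has no `n`-th entry when there is no such subsequence, so its length is that of a longest
strictly increasing subsequence. The invariant survives inserting a new letter `x`: the only new
last entries are `x` itself, for every length up to `i + 1`, where `i` is the position at which
`x` enters the row; and `x` is smaller than the entry it bumps and larger than those before it.
-/

/-- Row insertion: bump the leftmost entry strictly larger than `x`. -/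
def rowIns (r : List ℤ) (x : ℤ) : List ℤ × Option ℤ :=
  match r.findIdx? (fun y => decide (x < y)) with
  | none => (r ++ [x], none)
  | some i => (r.set i x, r[i]?)

/-- Insertion of an entry into a tableau (list of rows). -/
def tabIns : List (List ℤ) → ℤ → List (List ℤ)
  | [], x => [[x]]
  | r :: rest, x =>
    match rowIns r x with
    | (r', none) => r' :: rest
    | (r', some y) => r' :: tabIns rest y

/-- The RSK (Robinson–Schensted) insertion tableau `P(b)` of a sequence. -/
def RSK (b : List ℤ) : List (List ℤ) := b.foldl tabIns []

/-- `w` is the last entry of a strictly increasing subsequence of `l` of length `n + 1`. -/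
def IsIncSubseqEnd {α : Type*} [LT α] (l : List α) (n : ℕ) (w : α) : Prop :=
  ∃ s : List α, (s ++ [w]).Sublist l ∧ (s ++ [w]).IsChain (· < ·) ∧ s.length = n

section IncSubseq

variable {α : Type*} [LT α] {l l' s : List α} {n : ℕ} {w x : α}

theorem isIncSubseqEnd_zero_iff : IsIncSubseqEnd l 0 w ↔ w ∈ l := by
  simp [IsIncSubseqEnd]

theorem IsIncSubseqEnd.mem (h : IsIncSubseqEnd l n w) : w ∈ l := by
  obtain ⟨s, hs, -, -⟩ := h
  exact hs.subset (by simp)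

theorem IsIncSubseqEnd.mono (h : IsIncSubseqEnd l n w) (hl : l.Sublist l') :
    IsIncSubseqEnd l' n w := by
  obtain ⟨s, hs, hc, hn⟩ := h
  exact ⟨s, hs.trans hl, hc, hn⟩

theorem exists_lt_isIncSubseqEnd_of_isChain (hc : (s ++ [w]).IsChain (· < ·))
    (hn : s.length = n + 1) : ∃ y < w, IsIncSubseqEnd s n y := by
  obtain ⟨t, y, rfl⟩ : ∃ t y, s = t ++ [y] := by
    rcases List.eq_nil_or_concat s with rfl | ⟨t, y, rfl⟩
    · simp at hn
    · exact ⟨t, y, List.concat_eq_append⟩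
  simp only [List.append_assoc, List.cons_append, List.nil_append,
    List.isChain_append_cons_cons] at hc
  exact ⟨y, hc.2.1, t, List.Sublist.refl _, hc.1, by simpa using hn⟩

theorem IsIncSubseqEnd.exists_lt_of_succ (h : IsIncSubseqEnd l (n + 1) w) :
    ∃ y < w, IsIncSubseqEnd l n y := by
  obtain ⟨s, hs, hc, hn⟩ := h
  obtain ⟨y, hyw, hy⟩ := exists_lt_isIncSubseqEnd_of_isChain hc hn
  exact ⟨y, hyw, hy.mono ((List.sublist_append_left s [w]).trans hs)⟩

theorem isIncSubseqEnd_append_singleton_succ_iff :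
    IsIncSubseqEnd (l ++ [x]) (n + 1) w ↔
      IsIncSubseqEnd l (n + 1) w ∨ (∃ y < x, IsIncSubseqEnd l n y) ∧ w = x := by
  constructor
  · rintro ⟨s, hs, hc, hn⟩
    obtain ⟨l₁, l₂, hsplit, h₁, h₂⟩ := List.sublist_append_iff.1 hs
    rcases List.sublist_singleton.1 h₂ with rfl | rfl
    · rw [List.append_nil] at hsplit
      exact Or.inl ⟨s, hsplit ▸ h₁, hc, hn⟩
    · obtain ⟨rfl, hwx⟩ := List.append_inj' hsplit rfl
      obtain rfl : w = x := by simpa using hwx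
      obtain ⟨y, hyw, hy⟩ := exists_lt_isIncSubseqEnd_of_isChain hc hn
      exact Or.inr ⟨⟨y, hyw, hy.mono h₁⟩, rfl⟩
  · rintro (h | ⟨⟨y, hyw, t, ht, hc, rfl⟩, rfl⟩)
    · exact h.mono (List.sublist_append_left l [x])
    · refine ⟨t ++ [y], ht.append (List.Sublist.refl [w]), ?_, by simp⟩
      simpa [hyw] using hc

end IncSubseq

/-- `r[n]` is the least `w` with `IsIncSubseqEnd l n w`, and `r` has no `n`-th entry if there is
no such `w`. -/
def IsPatienceRow {α : Type*} [Preorder α] (l r : List α) : Prop :=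
  ∀ n z, (∃ y ∈ r[n]?, y ≤ z) ↔ ∃ w ≤ z, IsIncSubseqEnd l n w

namespace IsPatienceRow

variable {α : Type*} [PartialOrder α] {l r : List α} {n : ℕ} {y z : α}

theorem nil : IsPatienceRow ([] : List α) [] := by
  simp [IsPatienceRow, IsIncSubseqEnd]

theorem exists_lt_iff (h : IsPatienceRow l r) :
    (∃ y ∈ r[n]?, y < z) ↔ ∃ w < z, IsIncSubseqEnd l n w := by
  constructor
  · rintro ⟨y, hy, hyz⟩
    obtain ⟨w, hwy, hw⟩ := (h n y).1 ⟨y, hy, le_rfl⟩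
    exact ⟨w, hwy.trans_lt hyz, hw⟩
  · rintro ⟨w, hwz, hw⟩
    obtain ⟨y, hy, hyw⟩ := (h n w).2 ⟨w, le_rfl, hw⟩
    exact ⟨y, hy, hyw.trans_lt hwz⟩

theorem isIncSubseqEnd (h : IsPatienceRow l r) (hy : r[n]? = some y) :
    IsIncSubseqEnd l n y := by
  obtain ⟨w, hwy, hw⟩ := (h n y).1 ⟨y, hy, le_rfl⟩
  obtain ⟨y', hy', hyw⟩ := (h n w).2 ⟨w, le_rfl, hw⟩
  obtain rfl : y' = y := by simpa [hy] using hy'.symm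
  rwa [le_antisymm hwy hyw] at hw

theorem subset (h : IsPatienceRow l r) : r ⊆ l := fun _ hy ↦
  have ⟨_, hn⟩ := List.mem_iff_getElem?.1 hy
  (h.isIncSubseqEnd hn).mem

theorem pairwise (h : IsPatienceRow l r) : r.Pairwise (· < ·) := by
  refine List.isChain_iff_pairwise.1 (List.isChain_iff_getElem.2 fun n hn ↦ ?_)
  obtain ⟨w, hw, hwn⟩ := (h (n + 1) r[n + 1]).1 ⟨_, List.getElem?_eq_getElem hn, le_rfl⟩
  obtain ⟨y, hyw, hy⟩ := hwn.exists_lt_of_succ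
  obtain ⟨a, ha, hay⟩ := (h n y).2 ⟨y, le_rfl, hy⟩
  rw [List.getElem?_eq_getElem (by omega), Option.mem_some_iff] at ha
  exact ha ▸ hay.trans_lt (hyw.trans_le hw)

theorem isGreatest_length (h : IsPatienceRow l r) :
    IsGreatest {q | ∃ s : List α, s.Sublist l ∧ s.IsChain (· < ·) ∧ s.length = q} r.length := by
  constructor
  · rcases List.eq_nil_or_concat r with rfl | ⟨r', y, rfl⟩
    · exact ⟨[], List.nil_sublist l, List.isChain_nil, rfl⟩
    · obtain ⟨s, hs, hc, hn⟩ := h.isIncSubseqEnd (n := r'.length) (y := y) (by simp)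
      exact ⟨s ++ [y], hs, hc, by simp [hn]⟩
  · rintro q ⟨s, hs, hc, rfl⟩
    rcases List.eq_nil_or_concat s with rfl | ⟨t, w, rfl⟩
    · simp
    · rw [List.concat_eq_append] at hs hc ⊢
      obtain ⟨y, hy, -⟩ := (h t.length w).2 ⟨w, le_rfl, t, hs, hc, rfl⟩
      simpa using (List.getElem?_eq_some_iff.1 hy).1

end IsPatienceRow

theorem List.Pairwise.lt_iff_lt_findIdx {α : Type*} [LinearOrder α] {r : List α} {x y : α}
    {n : ℕ} (hr : r.Pairwise (· < ·)) (hx : x ∉ r) (hy : r[n]? = some y) :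
    y < x ↔ n < r.findIdx (x < ·) := by
  obtain ⟨hn, rfl⟩ := List.getElem?_eq_some_iff.1 hy
  constructor
  · intro hlt
    by_contra! hle
    have hx_lt : x < r[r.findIdx (x < ·)] := by
      simpa using List.findIdx_getElem (w := hle.trans_lt hn)
    have hmono : r[r.findIdx (x < ·)] ≤ r[n] := by
      rcases hle.eq_or_lt with heq | hlt'
      · simp only [heq, le_refl]
      · exact (List.pairwise_iff_getElem.1 hr _ _ _ hn hlt').le
    exact (hx_lt.trans_le hmono).asymm hlt
  · intro hlt
    have hle : r[n] ≤ x := by simpa using List.not_of_lt_findIdx hlt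
    exact hle.lt_of_ne fun he ↦ hx (he ▸ List.getElem_mem hn)

theorem rowIns_fst_getElem? (r : List ℤ) (x : ℤ) (n : ℕ) :
    (rowIns r x).1[n]? = if n = r.findIdx (x < ·) then some x else r[n]? := by
  unfold rowIns
  rcases hf : r.findIdx? (fun y ↦ decide (x < y)) with _ | i
  · rw [List.findIdx?_eq_none_iff_findIdx_eq] at hf
    rcases lt_trichotomy n r.length with hn | rfl | hn
    · simp [hf, hn.ne, List.getElem?_append_left hn]
    · simp [hf]
    · simp [hf, hn.ne', List.getElem?_eq_none, hn.le, Nat.succ_le_of_lt hn]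
  · obtain ⟨hi, rfl⟩ := List.findIdx?_eq_some_iff_findIdx_eq.1 hf
    simp [List.getElem?_set, hi, eq_comm]

section LinearOrder

variable {α : Type*} [LinearOrder α] {l r : List α} {x : α}

theorem IsPatienceRow.exists_lt_iff_lt_findIdx (h : IsPatienceRow l r) (hx : x ∉ l) (m : ℕ) :
    (∃ y < x, IsIncSubseqEnd l m y) ↔ m < r.findIdx (x < ·) := by
  have hxr : x ∉ r := fun hxr ↦ hx (h.subset hxr)
  rw [← h.exists_lt_iff]
  constructor
  · rintro ⟨y, hy, hyx⟩
    exact (h.pairwise.lt_iff_lt_findIdx hxr hy).1 hyx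
  · intro hm
    have hmr := List.getElem?_eq_getElem (hm.trans_le List.findIdx_le_length)
    exact ⟨_, hmr, (h.pairwise.lt_iff_lt_findIdx hxr hmr).2 hm⟩

theorem IsPatienceRow.isIncSubseqEnd_append_singleton_iff (h : IsPatienceRow l r) (hx : x ∉ l)
    (n : ℕ) (w : α) :
    IsIncSubseqEnd (l ++ [x]) n w ↔ IsIncSubseqEnd l n w ∨ n ≤ r.findIdx (x < ·) ∧ w = x := by
  cases n with
  | zero => simp [isIncSubseqEnd_zero_iff]
  | succ m =>
    rw [isIncSubseqEnd_append_singleton_succ_iff, h.exists_lt_iff_lt_findIdx hx, Nat.succ_le_iff]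

end LinearOrder

theorem IsPatienceRow.rowIns {l r : List ℤ} {x : ℤ} (h : IsPatienceRow l r) (hx : x ∉ l) :
    IsPatienceRow (l ++ [x]) (rowIns r x).1 := by
  have hxr : x ∉ r := fun hxr ↦ hx (h.subset hxr)
  intro n z
  simp only [rowIns_fst_getElem?, h.isIncSubseqEnd_append_singleton_iff hx, and_or_left,
    exists_or, ← h n z, exists_eq_right_right]
  rcases lt_trichotomy n (r.findIdx (x < ·)) with hn | hn | hn
  · have hnr := List.getElem?_eq_getElem (hn.trans_le List.findIdx_le_length)
    have hnx := (h.pairwise.lt_iff_lt_findIdx hxr hnr).2 hn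
    rw [if_neg hn.ne, hnr]
    simp only [Option.mem_some_iff, exists_eq_left']
    exact ⟨Or.inl, Or.rec id fun hxz ↦ hnx.le.trans hxz.1⟩
  · rw [if_pos hn]
    simp only [Option.mem_some_iff, exists_eq_left']
    refine ⟨fun hxz ↦ Or.inr ⟨hxz, hn.le⟩, Or.rec (fun ⟨y, hy, hyz⟩ ↦ ?_) And.left⟩
    exact (not_lt.1 fun hyx ↦ ((h.pairwise.lt_iff_lt_findIdx hxr hy).1 hyx).ne hn).trans hyz
  · simp [hn.ne', hn.not_ge]

theorem isPatienceRow_foldl_rowIns {l r : List ℤ} (b : List ℤ) (h : IsPatienceRow l r)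
    (hb : (l ++ b).Nodup) :
    IsPatienceRow (l ++ b) (b.foldl (fun r x ↦ (rowIns r x).1) r) := by
  induction b generalizing l r with
  | nil => simpa using h
  | cons x b ih =>
    have hx : x ∉ l := fun hxl ↦
      (List.nodup_cons.1 (List.nodup_middle.1 hb)).1 (List.mem_append_left b hxl)
    rw [List.append_cons] at hb ⊢
    exact ih (h.rowIns hx) hb

theorem headD_tabIns (t : List (List ℤ)) (x : ℤ) :
    (tabIns t x).headD [] = (rowIns (t.headD []) x).1 := by
  cases t with
  | nil => rfl
  | cons r rest =>
    rcases h : rowIns r x with ⟨r', _ | _⟩ <;> simp [tabIns, h]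

theorem headD_RSK (b : List ℤ) :
    (RSK b).headD [] = b.foldl (fun r x ↦ (rowIns r x).1) [] :=
  (List.foldl_hom (·.headD []) fun t x ↦ (headD_tabIns t x).symm).symm

/-- Schensted's theorem: the length of the first row of the RSK insertion
tableau `P(b)` is the maximal length of a strictly increasing subsequence of a
sequence `b` of distinct integers. -/
theorem schensted (b : List ℤ) (hb : b.Nodup) :
    IsGreatest {q | ∃ s : List ℤ, s.Sublist b ∧ s.Chain' (· < ·) ∧ s.length = q}
      ((RSK b).headD []).length := by
  rw [headD_RSK]
  have := (isPatienceRow_foldl_rowIns b IsPatienceRow.nil hb).isGreatest_length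
  rwa [List.nil_append] at this
end

section
/- Let F be a str-monotone function on bitableaux and k an integer; then the ideal I_k(F) of K[X] generated by all bitableaux Δ with F(Δ) ≥ k equals the K-vector space spanned by such bitableaux, and the standard bitableaux Σ with F(Σ) ≥ k form a K-basis of I_k(F). -/
open MvPolynomial

/-- A row of a bitableau: a list of row indices and a list of column indices
(of equal length, strictly increasing), representing a minor of `X`. -/
abbrev Brow (m n : ℕ) := List (Fin m) × List (Fin n)

/-- A bitableau: a list of rows (i.e. a product of minors). -/
abbrev Bitab (m n : ℕ) := List (Brow m n)

/-- A row represents an honest (nonempty) minor. -/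
def validRow {m n : ℕ} (p : Brow m n) : Prop :=
  p.1.length = p.2.length ∧ p.1.Chain' (· < ·) ∧ p.2.Chain' (· < ·) ∧ p.1 ≠ []

/-- A valid bitableau: all rows are minors, of weakly decreasing sizes. -/
def validB {m n : ℕ} (Δ : Bitab m n) : Prop :=
  (∀ p ∈ Δ, validRow p) ∧ (Δ.map (fun p => p.1.length)).Chain' (· ≥ ·)

/-- The straightening partial order on minors:
`δ ⪯ ε` iff `|ε| ≤ |δ|` and the indices of `δ` are entrywise `≤` those of `ε`. -/
def precRow {m n : ℕ} (p q : Brow m n) : Prop :=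
  ∃ (h1 : q.1.length ≤ p.1.length) (h2 : q.2.length ≤ p.2.length),
    (∀ i : Fin q.1.length, p.1.get ⟨i, lt_of_lt_of_le i.isLt h1⟩ ≤ q.1.get i) ∧
    (∀ i : Fin q.2.length, p.2.get ⟨i, lt_of_lt_of_le i.isLt h2⟩ ≤ q.2.get i)

/-- A standard bitableau: valid, with `δ_1 ⪯ δ_2 ⪯ …`. -/
def isStd {m n : ℕ} (Δ : Bitab m n) : Prop :=
  validB Δ ∧ Δ.Chain' precRow

variable (K : Type*) [Field K]

/-- The minor of the generic matrix `X` given by a row of a bitableau. -/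
noncomputable def rowPoly {m n : ℕ} (p : Brow m n) : MvPolynomial (Fin m × Fin n) K :=
  if h : p.1.length = p.2.length then
    (Matrix.of fun i j : Fin p.1.length =>
      (X (p.1.get i, p.2.get (Fin.cast h j)) : MvPolynomial (Fin m × Fin n) K)).det
  else 0

/-- The product of minors represented by a bitableau. -/
noncomputable def bitabPoly {m n : ℕ} (Δ : Bitab m n) : MvPolynomial (Fin m × Fin n) K :=
  (Δ.map (rowPoly K)).prod

/-- The main-diagonal monomial of a minor. -/
noncomputable def rowDiag {m n : ℕ} (p : Brow m n) : MvPolynomial (Fin m × Fin n) K :=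
  if h : p.1.length = p.2.length then
    ∏ i : Fin p.1.length, (X (p.1.get i, p.2.get (Fin.cast h i)) : MvPolynomial (Fin m × Fin n) K)
  else 0

/-- The initial monomial (w.r.t. a diagonal term order) of a bitableau:
the product of the diagonal monomials of its minors. -/
noncomputable def iniB {m n : ℕ} (Δ : Bitab m n) : MvPolynomial (Fin m × Fin n) K :=
  (Δ.map (rowDiag K)).prod

/-- `γ_t` of a bitableau: `Σ_i (|δ_i| − t + 1)_+`. -/
def gamB {m n : ℕ} (t : ℕ) (Δ : Bitab m n) : ℕ :=
  (Δ.map (fun p => p.1.length + 1 - t)).sum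

/-- `α_k` of a bitableau: the sum of the sizes of the first `k` minors. -/
def alB {m n : ℕ} (k : ℕ) (Δ : Bitab m n) : ℕ :=
  ((Δ.map (fun p => p.1.length)).take k).sum

/-- RSK pair insertion: insert the column index `b` into the right tableau by
bumping, recording the row index `a` in the left tableau at the final box. -/
def pIns {m n : ℕ} : Bitab m n → Fin m → Fin n → Bitab m n
  | [], a, b => [([a], [b])]
  | (s, r) :: rest, a, b =>
    match r.findIdx? (fun z => decide (b < z)) with
    | none => (s ++ [a], r ++ [b]) :: rest
    | some i => (s, r.set i b) :: pIns rest a (r.getD i b)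

/-- The two-row array of a monomial exponent: its variables (with multiplicity)
ordered with non-decreasing row indices and, within equal row indices,
non-increasing column indices. -/
noncomputable def monPairs {m n : ℕ} (d : (Fin m × Fin n) →₀ ℕ) : List (Fin m × Fin n) :=
  d.toMultiset.toList.mergeSort
    (fun p q => decide (p.1 < q.1 ∨ (p.1 = q.1 ∧ q.2 ≤ p.2)))

/-- The inverse KRS map: the standard bitableau obtained from a monomial by RSK
insertion of its two-row array. -/
noncomputable def krsInv {m n : ℕ} (d : (Fin m × Fin n) →₀ ℕ) : Bitab m n :=
  (monPairs d).foldl (fun T p => pIns T p.1 p.2) []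

open scoped Classical in
/-- The KRS image of a standard bitableau: the unique monomial mapping to it
under the inverse KRS map (junk value `0` otherwise). -/
noncomputable def krsMon {m n : ℕ} (Δ : Bitab m n) : MvPolynomial (Fin m × Fin n) K :=
  if h : ∃ d : (Fin m × Fin n) →₀ ℕ, krsInv d = Δ then monomial h.choose (1 : K) else 0

/-- The image `KRS(I)` of an ideal with a standard basis: the `K`-span of the
KRS images of the standard bitableaux contained in `I`. -/
noncomputable def krsIdeal {m n : ℕ} (I : Ideal (MvPolynomial (Fin m × Fin n) K)) :
    Submodule K (MvPolynomial (Fin m × Fin n) K) :=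
  Submodule.span K {g | ∃ Δ : Bitab m n, isStd Δ ∧ bitabPoly K Δ ∈ I ∧ g = krsMon K Δ}

/-- `I` has a standard basis: it is spanned over `K` by the standard bitableaux
it contains. -/
def hasStdBasis {m n : ℕ} (I : Ideal (MvPolynomial (Fin m × Fin n) K)) : Prop :=
  (I : Set (MvPolynomial (Fin m × Fin n) K)) =
    ↑(Submodule.span K {f | ∃ Δ : Bitab m n, isStd Δ ∧ bitabPoly K Δ = f ∧ f ∈ I})

/-- The leading exponent of a polynomial w.r.t. a monomial order. -/
noncomputable def ordDeg {σ : Type*} (ord : MonomialOrder σ)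
    (f : MvPolynomial σ K) : σ →₀ ℕ :=
  ord.toSyn.symm (f.support.sup (fun d => ord.toSyn d))

/-- The initial ideal of an ideal w.r.t. a monomial order. -/
noncomputable def iniIdeal {σ : Type*} (ord : MonomialOrder σ)
    (J : Ideal (MvPolynomial σ K)) : Ideal (MvPolynomial σ K) :=
  Ideal.span {g | ∃ f ∈ J, f ≠ 0 ∧ g = monomial (ordDeg K ord f) (1 : K)}

/-- A monomial order on the variables of `X` is diagonal if the leading
monomial of every minor is its main-diagonal monomial. -/
def isDiagOrder {m n : ℕ} (ord : MonomialOrder (Fin m × Fin n)) : Prop :=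
  ∀ p : Brow m n, validRow p →
    (monomial (ordDeg K ord (rowPoly K p)) (1 : K)) = rowDiag K p

/-!
A str-monotone `F` makes the span `V` of the standard bitableaux with `F ≥ k` stable under
multiplication: by (b), every standard bitableau occurring in `x Σ` again has `F ≥ k`. Hence
`V` is an ideal; it contains every bitableau `Δ` with `F(Δ) ≥ k` (take `x = 1`), and is
contained in the `K`-span of these. So the ideal they generate, their `K`-span and `V` coincide,
and the standard bitableaux are linearly independent, being part of a basis.
-/

open Submodule

section SpanIdeal

variable {A R : Type*} [CommSemiring A] [CommSemiring R] [Algebra A R]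

theorem mul_mem_span_of_forall_mul_mem {V : Set R} (hV : ∀ x, ∀ v ∈ V, x * v ∈ span A V)
    (x : R) {y : R} (hy : y ∈ span A V) : x * y ∈ span A V := by
  induction hy using Submodule.span_induction with
  | mem v hv => exact hV x v hv
  | zero => simp
  | add y z _ _ hy hz => rw [mul_add]; exact add_mem hy hz
  | smul c y _ hy => rw [mul_smul_comm]; exact smul_mem _ c hy

theorem coe_ideal_span_subset_span {S V : Set R} (hSV : S ⊆ span A V)
    (hV : ∀ x, ∀ v ∈ V, x * v ∈ span A V) : (Ideal.span S : Set R) ⊆ span A V := by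
  intro y hy
  induction hy using Submodule.span_induction with
  | mem g hg => exact hSV hg
  | zero => exact zero_mem _
  | add y z _ _ hy hz => exact add_mem hy hz
  | smul a y _ hy => exact mul_mem_span_of_forall_mul_mem hV a hy

theorem coe_ideal_span_eq_span_of_forall_mul_mem {S V : Set R} (hVS : V ⊆ S)
    (hmul : ∀ x, ∀ g ∈ S, x * g ∈ span A V) :
    (Ideal.span S : Set R) = span A S ∧ (Ideal.span S : Set R) = span A V := by
  have hIV : (Ideal.span S : Set R) ⊆ span A V :=
    coe_ideal_span_subset_span (fun g hg => by simpa using hmul 1 g hg)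
      fun x v hv => hmul x v (hVS hv)
  have hVS' : (span A V : Set R) ⊆ span A S := span_mono hVS
  have hSI : (span A S : Set R) ⊆ Ideal.span S := span_le_restrictScalars A R S
  exact ⟨(hIV.trans hVS').antisymm hSI, hIV.antisymm (hVS'.trans hSI)⟩

end SpanIdeal

section Bitableaux

variable {m n : ℕ}

def bitabPolysGe (F : Bitab m n → ℕ) (k : ℕ) : Set (MvPolynomial (Fin m × Fin n) K) :=
  {f | ∃ Δ : Bitab m n, validB Δ ∧ k ≤ F Δ ∧ f = bitabPoly K Δ}

def stdBitabPolysGe (F : Bitab m n → ℕ) (k : ℕ) : Set (MvPolynomial (Fin m × Fin n) K) :=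
  {f | ∃ T : Bitab m n, isStd T ∧ k ≤ F T ∧ f = bitabPoly K T}

theorem stdBitabPolysGe_subset (F : Bitab m n → ℕ) (k : ℕ) :
    stdBitabPolysGe K F k ⊆ bitabPolysGe K F k := by
  rintro f ⟨T, hT, hk, rfl⟩
  exact ⟨T, hT.1, hk, rfl⟩

variable (B : Module.Basis {Δ : Bitab m n // isStd Δ} K (MvPolynomial (Fin m × Fin n) K))

theorem stdBitabPolysGe_eq_basis_image (hB : ∀ T, B T = bitabPoly K T.val)
    (F : Bitab m n → ℕ) (k : ℕ) : stdBitabPolysGe K F k = B '' {T | k ≤ F T.val} := by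
  ext f
  constructor
  · rintro ⟨T, hT, hk, rfl⟩
    exact ⟨⟨T, hT⟩, hk, hB _⟩
  · rintro ⟨T, hk, rfl⟩
    exact ⟨T.val, T.prop, hk, hB T⟩

theorem mul_mem_span_stdBitabPolysGe (hB : ∀ T, B T = bitabPoly K T.val) (F : Bitab m n → ℕ)
    (hmono : ∀ (x : MvPolynomial (Fin m × Fin n) K) (Δ : Bitab m n), validB Δ →
      ∀ T ∈ (B.repr (x * bitabPoly K Δ)).support, F Δ ≤ F T.val) (k : ℕ) :
    ∀ x, ∀ g ∈ bitabPolysGe K F k, x * g ∈ span K (stdBitabPolysGe K F k) := by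
  rintro x _ ⟨Δ, hΔ, hk, rfl⟩
  rw [stdBitabPolysGe_eq_basis_image K B hB, B.mem_span_image]
  exact fun T hT => hk.trans (hmono x Δ hΔ T hT)

theorem linearIndependent_bitabPoly_std (hB : ∀ T, B T = bitabPoly K T.val)
    (P : Bitab m n → Prop) :
    LinearIndependent K (fun T : {T : Bitab m n // isStd T ∧ P T} => bitabPoly K T.val) := by
  have hcomp : (fun T : {T : Bitab m n // isStd T ∧ P T} => bitabPoly K T.val) =
      B ∘ Subtype.map id (fun _ h => h.1) := funext fun T => (hB ⟨T.val, T.prop.1⟩).symm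
  rw [hcomp]
  exact B.linearIndependent.comp _ (Subtype.map_injective _ Function.injective_id)

end Bitableaux

theorem Ik_str_monotone (m n : ℕ)
    (B : Module.Basis {Δ : Bitab m n // isStd Δ} K (MvPolynomial (Fin m × Fin n) K))
    (hB : ∀ T, B T = bitabPoly K T.val)
    (F : Bitab m n → ℕ)
    (hmono : ∀ (x : MvPolynomial (Fin m × Fin n) K) (Δ : Bitab m n), validB Δ →
      ∀ T ∈ (B.repr (x * bitabPoly K Δ)).support, F Δ ≤ F T.val)
    (k : ℕ) :
    ((Ideal.span {f | ∃ Δ : Bitab m n, validB Δ ∧ k ≤ F Δ ∧ f = bitabPoly K Δ} :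
        Ideal (MvPolynomial (Fin m × Fin n) K)) : Set (MvPolynomial (Fin m × Fin n) K)) =
      ↑(Submodule.span K
        {f | ∃ Δ : Bitab m n, validB Δ ∧ k ≤ F Δ ∧ f = bitabPoly K Δ}) ∧
    ((Ideal.span {f | ∃ Δ : Bitab m n, validB Δ ∧ k ≤ F Δ ∧ f = bitabPoly K Δ} :
        Ideal (MvPolynomial (Fin m × Fin n) K)) : Set (MvPolynomial (Fin m × Fin n) K)) =
      ↑(Submodule.span K
        {f | ∃ T : Bitab m n, isStd T ∧ k ≤ F T ∧ f = bitabPoly K T}) ∧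
    LinearIndependent K
      (fun T : {T : Bitab m n // isStd T ∧ k ≤ F T} => bitabPoly K T.val) := by
  obtain ⟨hS, hV⟩ := coe_ideal_span_eq_span_of_forall_mul_mem
    (stdBitabPolysGe_subset K F k) (mul_mem_span_stdBitabPolysGe K B hB F hmono k)
  exact ⟨hS, hV, linearIndependent_bitabPoly_std K B hB (k ≤ F ·)⟩
end

section
/- The standard bitableaux Σ = δ_1⋯δ_w with |δ_1| ≥ t form a K-basis of the determinantal ideal I_t. -/
open MvPolynomial

variable (K : Type*) [Field K]

/-!
Specialize `X` to the product `Y * Z` of generic `m × r` and `r × n` matrices, `r = t - 1`.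
Every minor of size `> r` maps to `0`, so `I_t` lies in the kernel. Conversely a standard
bitableau whose first minor has size `≥ t` lies in `I_t` by Laplace expansion. The images of the
remaining standard bitableaux (all minors of size `≤ r`) are linearly independent: for the
lexicographic order in which every `Y`-variable precedes every `Z`-variable, the image of the
minor `[a₁ … a_s | b₁ … b_s]` has leading monomial `∏ Y_{aᵢ i} Z_{i bᵢ}`, so the leading monomial
of the image of a bitableau records which indices occur at which position of its rows, and
standardness lets one read the bitableau back off it. As the standard bitableaux form a basis,
the kernel is then spanned by those of the first kind, and `span ⊆ I_t ⊆ ker = span`.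
-/

open scoped MonomialOrder

theorem Module.Basis.ker_eq_span_image_of_linearIndependent {ι R M N : Type*} [Ring R]
    [AddCommGroup M] [Module R M] [AddCommGroup N] [Module R N] (b : Module.Basis ι R M)
    (f : M →ₗ[R] N) (P : ι → Prop) (hP : ∀ i, P i → f (b i) = 0)
    (hli : LinearIndependent R fun i : {i // ¬ P i} => f (b i)) :
    LinearMap.ker f = Submodule.span R (b '' {i | P i}) := by
  classical
  refine le_antisymm (fun x hx => ?_) (Submodule.span_le.mpr ?_)
  · rw [b.mem_span_image]
    intro i hi
    by_contra hPi
    have hsum : ∑ j ∈ (b.repr x).support.subtype (¬ P ·), b.repr x j • f (b j) = 0 := by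
      rw [Finset.sum_subtype_eq_sum_filter (f := fun j => b.repr x j • f (b j)),
        Finset.sum_filter_of_ne fun j _ h => by contrapose! h; simp [hP j h]]
      conv_rhs => rw [← LinearMap.mem_ker.mp hx, ← b.linearCombination_repr x]
      simp [Finsupp.linearCombination_apply, Finsupp.sum]
    exact Finsupp.mem_support_iff.mp hi
      (linearIndependent_iff'.mp hli _ _ hsum ⟨i, hPi⟩ (by simpa using hi))
  · rintro _ ⟨i, hi, rfl⟩
    exact hP i hi

theorem MonomialOrder.linearIndependent_of_injective_degree {σ K ι : Type*} [Field K]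
    (m : MonomialOrder σ) (p : ι → MvPolynomial σ K) (hp : ∀ i, p i ≠ 0)
    (hinj : Function.Injective fun i => m.toSyn (m.degree (p i))) : LinearIndependent K p := by
  classical
  rw [linearIndependent_iff']
  intro s
  induction s using Finset.induction_on_max_value (fun i => m.toSyn (m.degree (p i))) with
  | empty => simp
  | insert i s hi hmax ih =>
    intro g hg
    have hgi : g i = 0 := by
      have := congrArg (coeff (m.degree (p i))) hg
      rw [Finset.sum_insert hi, coeff_add, coeff_sum, Finset.sum_eq_zero, coeff_smul] at this
      · simpa [hp i, m.leadingCoeff_ne_zero_iff] using this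
      intro j hj
      rw [coeff_smul, m.coeff_eq_zero_of_lt, smul_zero]
      exact lt_of_le_of_ne (hmax j hj) (fun h => hi (hinj h ▸ hj))
    rw [Finset.sum_insert hi, hgi, zero_smul, zero_add] at hg
    intro j hj
    rcases Finset.mem_insert.mp hj with rfl | hj
    · exact hgi
    · exact ih g hg j hj

theorem MonomialOrder.degree_sum_monomial {σ R ι : Type*} [CommSemiring R] [Nontrivial R]
    (m : MonomialOrder σ) (s : Finset ι) (e : ι → σ →₀ ℕ) (c : ι → R) {i₀ : ι}
    (hi₀ : i₀ ∈ s) (hc : c i₀ = 1) (hlt : ∀ i ∈ s, i ≠ i₀ → e i ≺[m] e i₀) :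
    m.degree (∑ i ∈ s, monomial (e i) (c i)) = e i₀ ∧
      m.Monic (∑ i ∈ s, monomial (e i) (c i)) := by
  classical
  have hcoeff : (∑ i ∈ s, monomial (e i) (c i)).coeff (e i₀) = 1 := by
    rw [coeff_sum, Finset.sum_eq_single_of_mem i₀ hi₀ fun i hi hne => ?_]
    · simpa using hc
    · rw [coeff_monomial, if_neg fun h => (hlt i hi hne).ne (congrArg m.toSyn h)]
  have hle : ∀ d ∈ (∑ i ∈ s, monomial (e i) (c i)).support, d ≼[m] e i₀ := by
    intro d hd
    obtain ⟨i, hi, hd⟩ := Finset.mem_biUnion.mp (support_sum hd)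
    rw [Finset.mem_singleton.mp (support_monomial_subset hd)]
    rcases eq_or_ne i i₀ with rfl | hne
    · exact le_rfl
    · exact (hlt i hi hne).le
  have hdeg := m.toSyn.injective <| le_antisymm (m.degree_le_iff.mpr hle)
    (m.le_degree (by simp [hcoeff]))
  exact ⟨hdeg, by rw [Monic, leadingCoeff, hdeg, hcoeff]⟩

theorem Finsupp.toLex_sum_single_graph_lt {α β τ : Type*} [LinearOrder α] [LinearOrder β]
    [LinearOrder τ] {s : ℕ} {e : α ×ₗ β → τ} (he : StrictMono e) {u : Fin s → α}
    (hu : StrictMono u) {g h : Fin s → β} {i₀ : Fin s} (hbelow : ∀ j < i₀, g j = h j)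
    (hlt : h i₀ < g i₀) :
    toLex (∑ i, single (e (toLex (u i, g i))) 1) <
      toLex (∑ i, single (e (toLex (u i, h i))) 1) := by
  classical
  have key : ∀ i, e (toLex (u i, g i)) < e (toLex (u i₀, h i₀)) ∨
      e (toLex (u i, h i)) < e (toLex (u i₀, h i₀)) → g i = h i := by
    intro i hi
    simp only [he.lt_iff_lt, Prod.Lex.toLex_lt_toLex] at hi
    rcases hi with (hi | ⟨hi, hg⟩) | (hi | ⟨hi, hh⟩)
    · exact hbelow i (hu.lt_iff_lt.mp hi)
    · obtain rfl := hu.injective hi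
      exact absurd hg (not_lt.mpr hlt.le)
    · exact hbelow i (hu.lt_iff_lt.mp hi)
    · obtain rfl := hu.injective hi
      exact absurd hh (lt_irrefl _)
  refine ⟨e (toLex (u i₀, h i₀)), fun v hv => ?_, ?_⟩
  · simp only [ofLex_toLex, Finsupp.coe_finsetSum, Finset.sum_apply, Finsupp.single_apply]
    refine Finset.sum_congr rfl fun i _ => if_congr ⟨fun hv' => ?_, fun hv' => ?_⟩ rfl rfl
    · rwa [← key i (Or.inl (hv' ▸ hv))]
    · rwa [key i (Or.inr (hv' ▸ hv))]
  · simp only [ofLex_toLex, Finsupp.coe_finsetSum, Finset.sum_apply, Finsupp.single_apply]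
    rw [Finset.sum_eq_zero fun i _ => if_neg fun hi => ?_]
    · exact Finset.sum_pos' (fun _ _ => Nat.zero_le _) ⟨i₀, Finset.mem_univ _, by simp⟩
    · obtain ⟨hui, hgi⟩ := Prod.mk.inj (toLex.injective (he.injective hi))
      obtain rfl := hu.injective hui
      exact hlt.ne' hgi

theorem Finsupp.toLex_add_lt_add_of_inl {α β : Type*} [LinearOrder α] [LinearOrder β]
    {d d' e e' : α ⊕ₗ β →₀ ℕ} (h : toLex d < toLex d')
    (hd' : ∀ b, d' (toLex (.inr b)) = 0) (he : ∀ a, e (toLex (.inl a)) = 0)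
    (he' : ∀ a, e' (toLex (.inl a)) = 0) :
    toLex (d + e) < toLex (d' + e') := by
  obtain ⟨w, hbelow, hw⟩ := h
  obtain ⟨a, rfl⟩ : ∃ a, w = toLex (.inl a) := by
    rcases w with a | b
    · exact ⟨a, rfl⟩
    · exact absurd (hd' b) (Nat.pos_iff_ne_zero.mp (Nat.zero_lt_of_lt hw))
  have hinl : ∀ v < toLex (Sum.inl a : α ⊕ β), ∃ a', v = toLex (.inl a') := by
    rintro (a' | b) hv
    · exact ⟨a', rfl⟩
    · exact absurd hv Sum.Lex.not_inr_lt_inl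
  refine ⟨toLex (.inl a), fun v hv => ?_, ?_⟩
  · obtain ⟨a', rfl⟩ := hinl v hv
    simpa [he, he'] using hbelow _ hv
  · simpa [he, he'] using hw

theorem Fin.exists_castLE_lt_of_ne {s r : ℕ} (hsr : s ≤ r) {f : Fin s → Fin r}
    (hf : Function.Injective f) (hne : f ≠ Fin.castLE hsr) :
    ∃ i₀, (∀ j < i₀, f j = Fin.castLE hsr j) ∧ Fin.castLE hsr i₀ < f i₀ := by
  obtain ⟨i₀, hi₀, hmin⟩ :=
    WellFounded.has_min wellFounded_lt {i | f i ≠ Fin.castLE hsr i} (Function.ne_iff.mp hne)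
  have hbelow : ∀ j < i₀, f j = Fin.castLE hsr j := fun j hj => by
    by_contra h; exact hmin j h hj
  refine ⟨i₀, hbelow, lt_of_le_of_ne (not_lt.mp fun hlt => ?_) (Ne.symm hi₀)⟩
  have hlt' : (f i₀ : ℕ) < i₀ := by simpa [Fin.lt_def] using hlt
  have hj := hbelow ⟨f i₀, hlt'.trans i₀.isLt⟩ hlt'
  exact hlt'.ne (congrArg Fin.val (hf (hj.trans (Fin.ext rfl))))

theorem Matrix.det_mul_eq_sum_injective {n o R : Type*} [Fintype n] [DecidableEq n] [Fintype o]
    [DecidableEq o] [CommRing R] (A : Matrix n o R) (B : Matrix o n R) :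
    (A * B).det = ∑ g : n → o with g.Injective, ∑ σ : Equiv.Perm n,
      (Equiv.Perm.sign σ : R) * ∏ i, A (σ i) (g i) * B (g i) i := by
  have hexp : (A * B).det = ∑ g : n → o, ∑ σ : Equiv.Perm n,
      (Equiv.Perm.sign σ : R) * ∏ i, A (σ i) (g i) * B (g i) i := by
    simp only [det_apply', mul_apply, Finset.prod_univ_sum, Finset.mul_sum, Fintype.piFinset_univ]
    rw [Finset.sum_comm]
  rw [hexp, Finset.sum_filter_of_ne]
  intro g _ hg
  contrapose! hg
  obtain ⟨i, j, hgij, hij⟩ := Function.not_injective_iff.mp hg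
  simp_rw [Finset.prod_mul_distrib, ← mul_assoc, ← Finset.sum_mul]
  rw [show ∑ σ : Equiv.Perm n, (Equiv.Perm.sign σ : R) * ∏ x, A (σ x) (g x)
      = (A.submatrix id g).det by simp [det_apply'],
    det_zero_of_column_eq hij (by simp [hgij]), zero_mul]

theorem List.exists_getElem?_le_of_forall_get_le {α : Type*} [Preorder α] {l l' : List α}
    (h : l'.length ≤ l.length)
    (hle : ∀ i : Fin l'.length, l.get ⟨i, lt_of_lt_of_le i.isLt h⟩ ≤ l'.get i)
    {k : ℕ} {c : α} (hk : l'[k]? = some c) : ∃ c', l[k]? = some c' ∧ c' ≤ c := by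
  obtain ⟨hk', rfl⟩ := List.getElem?_eq_some_iff.mp hk
  exact ⟨_, List.getElem?_eq_getElem (by omega), hle ⟨k, hk'⟩⟩

theorem List.eq_of_getElem?_le {α : Type*} [PartialOrder α] {l l' : List α}
    (h : ∀ (k : ℕ) c, l[k]? = some c → ∃ c', l'[k]? = some c' ∧ c' ≤ c)
    (h' : ∀ (k : ℕ) c, l'[k]? = some c → ∃ c', l[k]? = some c' ∧ c' ≤ c) : l = l' := by
  refine List.ext_getElem? fun k => ?_
  cases hk : l[k]? with
  | none =>
    cases hk' : l'[k]? with
    | none => rfl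
    | some c' => obtain ⟨_, h, -⟩ := h' k c' hk'; simp_all
  | some c =>
    obtain ⟨c', hk', hc'⟩ := h k c hk
    obtain ⟨c'', hk'', hc''⟩ := h' k c' hk'
    rw [hk, Option.some_inj] at hk''
    rw [hk', le_antisymm hc' (hk'' ▸ hc'')]

section Bitableaux

variable {K}

theorem bitabPoly_cons {m n : ℕ} (p : Brow m n) (Δ : Bitab m n) :
    bitabPoly K (p :: Δ) = rowPoly K p * bitabPoly K Δ := by
  simp [bitabPoly]

theorem precRow_refl {m n : ℕ} (p : Brow m n) : precRow p p :=
  ⟨le_rfl, le_rfl, fun _ => le_rfl, fun _ => le_rfl⟩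

theorem precRow_trans {m n : ℕ} {p q w : Brow m n} (hpq : precRow p q) (hqw : precRow q w) :
    precRow p w := by
  obtain ⟨hq1, hq2, hq3, hq4⟩ := hpq
  obtain ⟨hw1, hw2, hw3, hw4⟩ := hqw
  exact ⟨hw1.trans hq1, hw2.trans hq2, fun i => (hq3 ⟨i, _⟩).trans (hw3 i),
    fun i => (hq4 ⟨i, _⟩).trans (hw4 i)⟩

instance {m n : ℕ} : IsTrans (Brow m n) precRow := ⟨fun _ _ _ => precRow_trans⟩

theorem precRow_of_mem_of_chain {m n : ℕ} {p q : Brow m n} {Δ : Bitab m n}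
    (hc : (p :: Δ).IsChain precRow) (hq : q ∈ p :: Δ) : precRow p q := by
  rcases List.mem_cons.mp hq with rfl | hq
  · exact precRow_refl q
  · exact (List.pairwise_cons.mp (List.isChain_iff_pairwise.mp hc)).1 q hq

theorem precRow.exists_fst_getElem?_le {m n : ℕ} {p q : Brow m n} (h : precRow p q) {k : ℕ}
    {c : Fin m} (hk : q.1[k]? = some c) : ∃ c', p.1[k]? = some c' ∧ c' ≤ c :=
  List.exists_getElem?_le_of_forall_get_le h.1 h.2.2.1 hk

theorem precRow.exists_snd_getElem?_le {m n : ℕ} {p q : Brow m n} (h : precRow p q) {k : ℕ}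
    {c : Fin n} (hk : q.2[k]? = some c) : ∃ c', p.2[k]? = some c' ∧ c' ≤ c :=
  List.exists_getElem?_le_of_forall_get_le h.2.1 h.2.2.2 hk

theorem length_lt_of_not_head {m n t : ℕ} {Δ : Bitab m n} (hΔ : validB Δ)
    (h : ¬∃ p ∈ Δ.head?, t ≤ p.1.length) : ∀ p ∈ Δ, p.1.length < t := by
  cases Δ with
  | nil => simp
  | cons q Δ =>
    have hq : q.1.length < t := by simpa using h
    have hle := List.pairwise_cons.mp (List.isChain_iff_pairwise.mp hΔ.2)
    intro p hp
    rcases List.mem_cons.mp hp with rfl | hp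
    · exact hq
    · exact lt_of_le_of_lt (hle.1 _ (List.mem_map_of_mem hp)) hq

variable (K) in
noncomputable def minorIdeal (m n t : ℕ) : Ideal (MvPolynomial (Fin m × Fin n) K) :=
  Ideal.span {f | ∃ p : Brow m n, validRow p ∧ p.1.length = t ∧ f = rowPoly K p}

theorem rowPoly_eq_det {m n N : ℕ} (p : Brow m n) (h1 : p.1.length = N) (h2 : p.2.length = N) :
    rowPoly K p = (Matrix.of fun i j : Fin N =>
      (X (p.1.get (i.cast h1.symm), p.2.get (j.cast h2.symm)) : MvPolynomial _ K)).det := by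
  obtain ⟨rows, cols⟩ := p
  subst h1
  simp [rowPoly, h2]

theorem validRow_tail_eraseIdx {m n : ℕ} {p : Brow m n} (hp : validRow p) {j : ℕ}
    (hj : j < p.2.length) (h2 : 2 ≤ p.1.length) : validRow (p.1.tail, p.2.eraseIdx j) := by
  obtain ⟨hlen, hrows, hcols, -⟩ := hp
  refine ⟨by simp [List.length_eraseIdx_of_lt hj, hlen], hrows.tail, ?_, ?_⟩
  · exact List.isChain_iff_pairwise.mpr
      ((List.isChain_iff_pairwise.mp hcols).sublist (List.eraseIdx_sublist _ _))
  · rw [← List.length_pos_iff, List.length_tail]; omega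

theorem rowPoly_mem_minorIdeal {m n t : ℕ} (ht : 1 ≤ t) {p : Brow m n} (hp : validRow p)
    (htp : t ≤ p.1.length) : rowPoly K p ∈ minorIdeal K m n t := by
  obtain ⟨N, hN⟩ : ∃ N, p.1.length = N := ⟨_, rfl⟩
  have htN : t ≤ N := hN ▸ htp
  clear htp
  induction N, htN using Nat.le_induction generalizing p with
  | base => exact Ideal.subset_span ⟨p, hp, hN, rfl⟩
  | succ N hN' ih =>
    have h2 : p.2.length = N + 1 := hp.1 ▸ hN
    rw [rowPoly_eq_det p hN h2, Matrix.det_succ_row_zero]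
    refine Ideal.sum_mem _ fun j _ => Ideal.mul_mem_left _ _ ?_
    have hj : (j : ℕ) < p.2.length := by omega
    have hv := validRow_tail_eraseIdx hp hj (by omega)
    convert ih hv (by simp [hN]) using 1
    rw [rowPoly_eq_det (N := N) _ (by simp [hN]) (by simp [List.length_eraseIdx_of_lt hj, h2])]
    congr 1
    refine Matrix.ext fun i k => ?_
    simp only [Matrix.submatrix_apply, Matrix.of_apply, List.get_eq_getElem, Fin.val_cast,
      List.getElem_tail, List.getElem_eraseIdx, Fin.val_succ]
    split_ifs with hkj
    · simp only [Fin.succAbove_of_castSucc_lt _ _ (Fin.lt_def.mpr hkj), Fin.val_castSucc]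
    · simp only [Fin.succAbove_of_le_castSucc _ _ (Fin.le_def.mpr (by simpa using hkj)),
        Fin.val_succ]

theorem bitabPoly_mem_minorIdeal {m n t : ℕ} (ht : 1 ≤ t) {Δ : Bitab m n}
    (hΔ : ∀ p ∈ Δ, validRow p) (hhead : ∃ p ∈ Δ.head?, t ≤ p.1.length) :
    bitabPoly K Δ ∈ minorIdeal K m n t := by
  obtain ⟨p, hp, htp⟩ := hhead
  obtain ⟨Δ, rfl⟩ : ∃ Δ', Δ = p :: Δ' := by cases Δ <;> simp_all
  rw [bitabPoly_cons]
  exact Ideal.mul_mem_right _ _ (rowPoly_mem_minorIdeal ht (hΔ p List.mem_cons_self) htp)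

end Bitableaux

/-- Variables `Y_{a k}` and `Z_{k b}`. The order matters: all `Y`s precede all `Z`s, and within
each block the order is lexicographic in `(a, k)`, resp. `(k, b)`. -/
abbrev YZVar (m n r : ℕ) := (Fin m ×ₗ Fin r) ⊕ₗ (Fin r ×ₗ Fin n)

section YZ

variable {K} {m n r : ℕ}

def yVar (a : Fin m) (k : Fin r) : YZVar m n r := toLex (.inl (toLex (a, k)))

def zVar (k : Fin r) (b : Fin n) : YZVar m n r := toLex (.inr (toLex (k, b)))

variable (K m n r) in
noncomputable def evalYZ : MvPolynomial (Fin m × Fin n) K →ₐ[K] MvPolynomial (YZVar m n r) K :=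
  aeval fun q => ∑ k, X (yVar q.1 k) * X (zVar k q.2)

/-- The exponent of the term of `det (Y_a * Z_b)` given by the permutation `σ` and the choice
`g` of inner indices, see `evalYZ_rowPoly`. -/
noncomputable def minorExp {s : ℕ} (a : Fin s → Fin m) (b : Fin s → Fin n)
    (σ : Equiv.Perm (Fin s)) (g : Fin s → Fin r) : YZVar m n r →₀ ℕ :=
  ∑ i, Finsupp.single (yVar (a (σ i)) (g i)) 1 + ∑ i, Finsupp.single (zVar (g i) (b i)) 1

theorem minorExp_lt {s : ℕ} (hsr : s ≤ r) {a : Fin s → Fin m} (ha : StrictMono a)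
    {b : Fin s → Fin n} (hb : StrictMono b) {σ : Equiv.Perm (Fin s)} {g : Fin s → Fin r}
    (hg : g.Injective) (hne : (g, σ) ≠ (Fin.castLE hsr, 1)) :
    toLex (minorExp a b σ g) < toLex (minorExp a b 1 (Fin.castLE hsr)) := by
  have hy : ∑ i, Finsupp.single (yVar (a (σ i)) (g i)) 1 =
      ∑ j, (Finsupp.single (yVar (a j) (g (σ.symm j))) 1 : YZVar m n r →₀ ℕ) :=
    (Equiv.sum_comp σ.symm _).symm.trans (by simp)
  unfold minorExp
  rw [hy]
  -- Unless `g ∘ σ⁻¹` is the inclusion, the `Y`-part alone is lex-smaller; otherwise `σ ≠ 1`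
  -- and the `Y`-parts agree, so the `Z`-parts decide.
  by_cases hf : g ∘ σ.symm = Fin.castLE hsr
  · have hg' : ∀ i, g i = Fin.castLE hsr (σ i) := fun i => by simpa using congrFun hf (σ i)
    have hσ : σ ≠ 1 := by
      rintro rfl
      exact hne (Prod.ext (funext hg') rfl)
    have hz : ∑ i, Finsupp.single (zVar (g i) (b i)) 1 = ∑ j,
        (Finsupp.single (zVar (Fin.castLE hsr j) (b (σ.symm j))) 1 : YZVar m n r →₀ ℕ) :=
      (Equiv.sum_comp σ.symm _).symm.trans (by simp [hg'])
    have hτ : (σ.symm : Fin s → Fin s) ≠ Fin.castLE le_rfl := fun h => hσ (by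
      ext j
      simpa using (congrArg Fin.val (congrFun h (σ j))).symm)
    obtain ⟨i₀, hbelow, hlt⟩ := Fin.exists_castLE_lt_of_ne le_rfl σ.symm.injective hτ
    simp only [hz, show ∀ j, g (σ.symm j) = Fin.castLE hsr j from fun j => congrFun hf j,
      Equiv.Perm.coe_one, id]
    rw [toLex_add, toLex_add]
    refine (add_lt_add_iff_left _).mpr ?_
    exact Finsupp.toLex_sum_single_graph_lt (e := fun x => toLex (Sum.inr x))
      Sum.Lex.inr_strictMono (Fin.strictMono_castLE hsr) (g := b ∘ σ.symm) (h := b)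
      (fun j hj => by simp [hbelow j hj]) (hb (by simpa using hlt))
  · obtain ⟨i₀, hbelow, hlt⟩ := Fin.exists_castLE_lt_of_ne hsr (hg.comp σ.symm.injective) hf
    refine Finsupp.toLex_add_lt_add_of_inl ?_ (fun _ => by simp [yVar]) (fun _ => by simp [zVar])
      (fun _ => by simp [zVar])
    exact Finsupp.toLex_sum_single_graph_lt (e := fun x => toLex (Sum.inl x))
      Sum.Lex.inl_strictMono ha hbelow hlt

theorem evalYZ_rowPoly {p : Brow m n} (h : p.1.length = p.2.length) :
    evalYZ K m n r (rowPoly K p) = ∑ g : Fin p.1.length → Fin r with g.Injective,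
      ∑ σ : Equiv.Perm (Fin p.1.length),
        monomial (minorExp p.1.get (fun i => p.2.get (i.cast h)) σ g)
          ((Equiv.Perm.sign σ : ℤ) : K) := by
  let A : Matrix (Fin p.1.length) (Fin r) (MvPolynomial (YZVar m n r) K) :=
    Matrix.of fun i k => X (yVar (p.1.get i) k)
  let B : Matrix (Fin r) (Fin p.1.length) (MvPolynomial (YZVar m n r) K) :=
    Matrix.of fun k j => X (zVar k (p.2.get (j.cast h)))
  have hAB : (Matrix.of fun i j : Fin p.1.length =>
      (X (p.1.get i, p.2.get (j.cast h)) : MvPolynomial _ K)).map (evalYZ K m n r) = A * B := by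
    ext i j : 1
    simp [A, B, evalYZ, Matrix.mul_apply]
  rw [rowPoly, dif_pos h, AlgHom.map_det, AlgHom.mapMatrix_apply, hAB,
    Matrix.det_mul_eq_sum_injective]
  refine Finset.sum_congr rfl fun g _ => Finset.sum_congr rfl fun σ _ => ?_
  simp only [A, B, Matrix.of_apply, minorExp, X, ← monomial_sum_one, monomial_mul, mul_one]
  rw [← Finset.sum_add_distrib, ← map_intCast (C : K →+* MvPolynomial _ K), C_mul_monomial,
    mul_one]

variable (r) in
/-- The exponent of the diagonal term `∏ Y_{aᵢ i} Z_{i bᵢ}`; junk value `0` unless `p` is a square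
minor of size `≤ r`. -/
noncomputable def rowMark (p : Brow m n) : YZVar m n r →₀ ℕ :=
  if h : p.1.length = p.2.length ∧ p.1.length ≤ r then
    minorExp p.1.get (fun i => p.2.get (i.cast h.1)) 1 (Fin.castLE h.2)
  else 0

theorem degree_evalYZ_rowPoly {p : Brow m n} (hp : validRow p) (hr : p.1.length ≤ r) :
    MonomialOrder.lex.degree (evalYZ K m n r (rowPoly K p)) = rowMark r p ∧
      MonomialOrder.lex.Monic (evalYZ K m n r (rowPoly K p)) := by
  set b : Fin p.1.length → Fin n := fun i => p.2.get (i.cast hp.1)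
  have hb : StrictMono b := hp.2.2.1.sortedLT.strictMono_get.comp fun _ _ h => h
  have key := MonomialOrder.degree_sum_monomial (R := K) MonomialOrder.lex
    ((Finset.univ.filter fun g : Fin p.1.length → Fin r => g.Injective) ×ˢ Finset.univ)
    (fun x => minorExp p.1.get b x.2 x.1) (fun x => ((Equiv.Perm.sign x.2 : ℤ) : K))
    (i₀ := (Fin.castLE hr, 1)) (by simp [(Fin.strictMono_castLE hr).injective]) (by simp)
    fun x hx hne => minorExp_lt hr hp.2.1.sortedLT.strictMono_get hb
      (Finset.mem_filter.mp (Finset.mem_product.mp hx).1).2 hne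
  rw [evalYZ_rowPoly hp.1, ← Finset.sum_product', rowMark, dif_pos ⟨hp.1, hr⟩]
  exact key

theorem evalYZ_rowPoly_eq_zero {p : Brow m n} (hp : p.1.length = p.2.length)
    (hr : r < p.1.length) : evalYZ K m n r (rowPoly K p) = 0 := by
  rw [evalYZ_rowPoly hp, Finset.sum_eq_zero]
  intro g hg
  have := Fintype.card_le_of_injective g (Finset.mem_filter.mp hg).2
  simp only [Fintype.card_fin] at this
  omega

theorem rowMark_yVar_ne_zero_iff {p : Brow m n} (hp : p.1.length = p.2.length)
    (hr : p.1.length ≤ r) {c : Fin m} {k : Fin r} :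
    rowMark r p (yVar c k) ≠ 0 ↔ p.1[(k : ℕ)]? = some c := by
  rw [rowMark, dif_pos ⟨hp, hr⟩, List.getElem?_eq_some_iff]
  simp [minorExp, Finsupp.single_apply, yVar, zVar, Fin.ext_iff, Fin.exists_iff, and_comm]

theorem rowMark_zVar_ne_zero_iff {p : Brow m n} (hp : p.1.length = p.2.length)
    (hr : p.1.length ≤ r) {c : Fin n} {k : Fin r} :
    rowMark r p (zVar k c) ≠ 0 ↔ p.2[(k : ℕ)]? = some c := by
  rw [rowMark, dif_pos ⟨hp, hr⟩, List.getElem?_eq_some_iff]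
  simp [minorExp, Finsupp.single_apply, yVar, zVar, Fin.ext_iff, Fin.exists_iff, hp]

variable (r) in
noncomputable def tabMark (Δ : Bitab m n) : YZVar m n r →₀ ℕ :=
  (Δ.map (rowMark r)).sum

theorem degree_evalYZ_bitabPoly {Δ : Bitab m n}
    (hΔ : ∀ p ∈ Δ, validRow p ∧ p.1.length ≤ r) :
    MonomialOrder.lex.degree (evalYZ K m n r (bitabPoly K Δ)) = tabMark r Δ ∧
      MonomialOrder.lex.Monic (evalYZ K m n r (bitabPoly K Δ)) := by
  induction Δ with
  | nil => simp [bitabPoly, tabMark]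
  | cons p Δ ih =>
    obtain ⟨hdeg, hmon⟩ := ih fun q hq => hΔ q (List.mem_cons_of_mem _ hq)
    obtain ⟨hdeg₀, hmon₀⟩ := degree_evalYZ_rowPoly (K := K) (hΔ p List.mem_cons_self).1
      (hΔ p List.mem_cons_self).2
    rw [bitabPoly_cons, map_mul, MonomialOrder.degree_mul hmon₀.ne_zero hmon.ne_zero, hdeg₀,
      hdeg]
    exact ⟨by simp [tabMark], hmon₀.mul hmon⟩

theorem tabMark_ne_zero_iff {Δ : Bitab m n} {v : YZVar m n r} :
    tabMark r Δ v ≠ 0 ↔ ∃ p ∈ Δ, rowMark r p v ≠ 0 := by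
  induction Δ with
  | nil => simp [tabMark]
  | cons p Δ ih =>
    rw [tabMark, List.map_cons, List.sum_cons, Finsupp.add_apply, ← tabMark, ne_eq,
      Nat.add_eq_zero_iff, not_and_or, ← ne_eq, ← ne_eq, ih]
    simp

theorem tabMark_cons_ne_zero {q : Brow m n} {Γ : Bitab m n} (hq : validRow q)
    (hr : q.1.length ≤ r) : tabMark r (q :: Γ) ≠ 0 := by
  obtain ⟨c, hc⟩ : ∃ c, q.1[0]? = some c := Option.isSome_iff_exists.mp (by
    simpa [List.length_pos_iff] using hq.2.2.2)
  have h0 : 0 < r := lt_of_lt_of_le (List.length_pos_iff.mpr hq.2.2.2) hr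
  intro h
  have : tabMark r (q :: Γ) (yVar c ⟨0, h0⟩) ≠ 0 := tabMark_ne_zero_iff.mpr
    ⟨q, List.mem_cons_self, (rowMark_yVar_ne_zero_iff hq.1 hr).mpr hc⟩
  simp [h] at this

theorem exists_fst_getElem?_le_of_tabMark_eq {Δ Γ : Bitab m n} {q : Brow m n}
    (hΔ : ∀ p ∈ Δ, validRow p ∧ p.1.length ≤ r)
    (hΓ : ∀ p ∈ q :: Γ, validRow p ∧ p.1.length ≤ r)
    (hc : (q :: Γ).IsChain precRow) (heq : tabMark r Δ = tabMark r (q :: Γ)) {p : Brow m n}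
    (hp : p ∈ Δ) {k : ℕ} {c : Fin m} (hk : p.1[k]? = some c) :
    ∃ c', q.1[k]? = some c' ∧ c' ≤ c := by
  have hkr : k < r := (List.getElem?_eq_some_iff.mp hk).1.trans_le (hΔ p hp).2
  have hne : tabMark r (q :: Γ) (yVar c ⟨k, hkr⟩) ≠ 0 := heq ▸ tabMark_ne_zero_iff.mpr
    ⟨p, hp, (rowMark_yVar_ne_zero_iff (hΔ p hp).1.1 (hΔ p hp).2).mpr hk⟩
  obtain ⟨q', hq', hne'⟩ := tabMark_ne_zero_iff.mp hne
  exact (precRow_of_mem_of_chain hc hq').exists_fst_getElem?_le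
    ((rowMark_yVar_ne_zero_iff (hΓ q' hq').1.1 (hΓ q' hq').2).mp hne')

theorem exists_snd_getElem?_le_of_tabMark_eq {Δ Γ : Bitab m n} {q : Brow m n}
    (hΔ : ∀ p ∈ Δ, validRow p ∧ p.1.length ≤ r)
    (hΓ : ∀ p ∈ q :: Γ, validRow p ∧ p.1.length ≤ r)
    (hc : (q :: Γ).IsChain precRow) (heq : tabMark r Δ = tabMark r (q :: Γ)) {p : Brow m n}
    (hp : p ∈ Δ) {k : ℕ} {c : Fin n} (hk : p.2[k]? = some c) :
    ∃ c', q.2[k]? = some c' ∧ c' ≤ c := by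
  have hkr : k < r :=
    (List.getElem?_eq_some_iff.mp hk).1.trans_le ((hΔ p hp).1.1 ▸ (hΔ p hp).2)
  have hne : tabMark r (q :: Γ) (zVar ⟨k, hkr⟩ c) ≠ 0 := heq ▸ tabMark_ne_zero_iff.mpr
    ⟨p, hp, (rowMark_zVar_ne_zero_iff (hΔ p hp).1.1 (hΔ p hp).2).mpr hk⟩
  obtain ⟨q', hq', hne'⟩ := tabMark_ne_zero_iff.mp hne
  exact (precRow_of_mem_of_chain hc hq').exists_snd_getElem?_le
    ((rowMark_zVar_ne_zero_iff (hΓ q' hq').1.1 (hΓ q' hq').2).mp hne')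

theorem eq_of_tabMark_eq {Δ Γ : Bitab m n} (hΔ : ∀ p ∈ Δ, validRow p ∧ p.1.length ≤ r)
    (hΔc : Δ.IsChain precRow) (hΓ : ∀ p ∈ Γ, validRow p ∧ p.1.length ≤ r)
    (hΓc : Γ.IsChain precRow) (heq : tabMark r Δ = tabMark r Γ) : Δ = Γ := by
  induction Δ generalizing Γ with
  | nil =>
    cases Γ with
    | nil => rfl
    | cons q Γ =>
      obtain ⟨hq, hqr⟩ := hΓ q List.mem_cons_self
      exact absurd heq.symm (tabMark_cons_ne_zero hq hqr)
  | cons p Δ ih =>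
    cases Γ with
    | nil =>
      obtain ⟨hp, hpr⟩ := hΔ p List.mem_cons_self
      exact absurd heq (tabMark_cons_ne_zero hp hpr)
    | cons q Γ =>
      have hpq : p = q := Prod.ext
        (List.eq_of_getElem?_le
          (fun _ _ => exists_fst_getElem?_le_of_tabMark_eq hΔ hΓ hΓc heq List.mem_cons_self)
          (fun _ _ => exists_fst_getElem?_le_of_tabMark_eq hΓ hΔ hΔc heq.symm List.mem_cons_self))
        (List.eq_of_getElem?_le
          (fun _ _ => exists_snd_getElem?_le_of_tabMark_eq hΔ hΓ hΓc heq List.mem_cons_self)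
          (fun _ _ => exists_snd_getElem?_le_of_tabMark_eq hΓ hΔ hΔc heq.symm List.mem_cons_self))
      subst hpq
      rw [ih (fun q hq => hΔ q (List.mem_cons_of_mem _ hq)) hΔc.tail
        (fun q hq => hΓ q (List.mem_cons_of_mem _ hq)) hΓc.tail
        (add_left_cancel (a := rowMark r p) (by simpa [tabMark] using heq))]

theorem minorIdeal_le_ker_evalYZ {m n t : ℕ} :
    minorIdeal K m n (t + 1) ≤ RingHom.ker (evalYZ K m n t) :=
  Ideal.span_le.mpr fun _ ⟨_, hp, hlen, hf⟩ =>
    hf ▸ evalYZ_rowPoly_eq_zero hp.1 (by omega)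

theorem linearIndependent_evalYZ_bitabPoly {m n r : ℕ} {ι : Type*} {f : ι → Bitab m n}
    (hf : f.Injective) (hstd : ∀ i, isStd (f i))
    (hsmall : ∀ i, ∀ p ∈ f i, p.1.length ≤ r) :
    LinearIndependent K fun i => evalYZ K m n r (bitabPoly K (f i)) := by
  have hdeg i := degree_evalYZ_bitabPoly (K := K) fun p hp => ⟨(hstd i).1.1 p hp, hsmall i p hp⟩
  refine MonomialOrder.lex.linearIndependent_of_injective_degree _ (fun i => (hdeg i).2.ne_zero)
    fun i j hij => hf ?_
  refine eq_of_tabMark_eq (fun p hp => ⟨(hstd i).1.1 p hp, hsmall i p hp⟩) (hstd i).2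
    (fun p hp => ⟨(hstd j).1.1 p hp, hsmall j p hp⟩) (hstd j).2 ?_
  simpa [(hdeg i).1, (hdeg j).1] using hij

theorem ker_evalYZ_eq_span {m n r : ℕ}
    (B : Module.Basis {Δ : Bitab m n // isStd Δ} K (MvPolynomial (Fin m × Fin n) K))
    (hB : ∀ T, B T = bitabPoly K T.val) :
    LinearMap.ker (evalYZ K m n r).toLinearMap = Submodule.span K
      {f | ∃ Δ : Bitab m n, isStd Δ ∧ (∃ p ∈ Δ.head?, r + 1 ≤ p.1.length) ∧
        f = bitabPoly K Δ} := by
  have hsmall : LinearIndependent K fun T : {T : {Δ // isStd Δ} //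
      ¬∃ p ∈ T.1.head?, r + 1 ≤ p.1.length} => (evalYZ K m n r).toLinearMap (B T.1) := by
    simp only [AlgHom.toLinearMap_apply, hB]
    exact linearIndependent_evalYZ_bitabPoly (fun T T' h => Subtype.ext (Subtype.ext h))
      (fun T => T.1.2) fun T p hp => Nat.le_of_lt_succ (length_lt_of_not_head T.1.2.1 T.2 p hp)
  rw [B.ker_eq_span_image_of_linearIndependent _ _ (fun T hT => minorIdeal_le_ker_evalYZ
    (hB T ▸ bitabPoly_mem_minorIdeal le_add_self T.2.1.1 hT)) hsmall]
  congr 1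
  ext f
  simp only [Set.mem_image, Set.mem_ofPred_eq, hB]
  exact ⟨fun ⟨T, hT, hf⟩ => ⟨T.1, T.2, hT, hf.symm⟩,
    fun ⟨Δ, hΔ, hT, hf⟩ => ⟨⟨Δ, hΔ⟩, hT, hf.symm⟩⟩

end YZ

theorem It_standard_basis (m n t : ℕ) (ht1 : 1 ≤ t)
    (B : Module.Basis {Δ : Bitab m n // isStd Δ} K (MvPolynomial (Fin m × Fin n) K))
    (hB : ∀ T, B T = bitabPoly K T.val) :
    ((Ideal.span {f | ∃ p : Brow m n, validRow p ∧ p.1.length = t ∧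
        f = rowPoly K p} : Ideal (MvPolynomial (Fin m × Fin n) K)) :
      Set (MvPolynomial (Fin m × Fin n) K)) =
      ↑(Submodule.span K {f | ∃ Δ : Bitab m n, isStd Δ ∧
        (∃ p ∈ Δ.head?, t ≤ p.1.length) ∧ f = bitabPoly K Δ}) ∧
    LinearIndependent K
      (fun T : {Δ : Bitab m n // isStd Δ ∧ ∃ p ∈ Δ.head?, t ≤ p.1.length} =>
        bitabPoly K T.val) := by
  obtain ⟨r, rfl⟩ : ∃ r, t = r + 1 := ⟨t - 1, by omega⟩
  refine ⟨subset_antisymm (fun x hx => ?_) ?_, ?_⟩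
  · rw [SetLike.mem_coe, ← ker_evalYZ_eq_span B hB]
    exact minorIdeal_le_ker_evalYZ hx
  · refine Submodule.span_le (p := (minorIdeal K m n (r + 1)).restrictScalars K) |>.mpr ?_
    rintro _ ⟨Δ, hΔ, hhead, rfl⟩
    exact bitabPoly_mem_minorIdeal ht1 hΔ.1.1 hhead
  · have := B.linearIndependent.comp
      (fun T : {Δ // isStd Δ ∧ ∃ p ∈ Δ.head?, r + 1 ≤ p.1.length} => (⟨T.1, T.2.1⟩ : {Δ // _}))
      fun T T' h => Subtype.ext (congrArg (fun x : {Δ // isStd Δ} => x.1) h)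
    simpa only [Function.comp_def, hB] using this
end

section
/- For each t with 1 ≤ t ≤ min(m,n) and each r ≥ 1, the symbolic power satisfies I_t^{(r)} = Σ_{k≥1} J(k, r + k(t−1)), where J(k,d) is the ideal whose standard basis consists of the standard bitableaux Σ with α_k(Σ) ≥ d. -/
open MvPolynomial

variable (K : Type*) [Field K]

private lemma sum_tsub_le (c : ℕ) : ∀ (L : List ℕ),
    L.sum - L.length * c ≤ (L.map (· - c)).sum := by
  intro L
  induction L with
  | nil => simp
  | cons a L ih => simp only [List.sum_cons, List.length_cons, List.map_cons, Nat.succ_mul]; omega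

private lemma dirA {t r k : ℕ} (ht : 1 ≤ t) (L : List ℕ) (hk : 1 ≤ k)
    (h : r + k * (t - 1) ≤ (L.take k).sum) :
    r ≤ (L.map (· - (t - 1))).sum := by
  have hsplit : (L.map (· - (t - 1))).sum =
      ((L.take k).map (· - (t - 1))).sum + ((L.drop k).map (· - (t - 1))).sum := by
    rw [← List.sum_append, ← List.map_append, List.take_append_drop]
  have h1 := sum_tsub_le (t - 1) (L.take k)
  have hlen : (L.take k).length ≤ k := by simp
  have : (L.take k).length * (t - 1) ≤ k * (t - 1) := Nat.mul_le_mul_right _ hlen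
  omega

private lemma dirB {c : ℕ} : ∀ (L : List ℕ) (r : ℕ), 1 ≤ r → L.Pairwise (· ≥ ·) →
    r ≤ (L.map (· - c)).sum → ∃ k, 1 ≤ k ∧ r + k * c ≤ (L.take k).sum := by
  intro L
  induction L with
  | nil => intro r hr _ h; simp at h; omega
  | cons a L ih =>
    intro r hr hpw h
    simp only [List.map_cons, List.sum_cons] at h
    by_cases hac : a ≤ c
    · have hz : (L.map (· - c)).sum = 0 := by
        apply List.sum_eq_zero
        intro x hx
        simp only [List.mem_map] at hx
        obtain ⟨y, hy, rfl⟩ := hx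
        have := (List.pairwise_cons.mp hpw).1 y hy
        omega
      exfalso; omega
    · by_cases hra : r ≤ a - c
      · exact ⟨1, le_refl 1, by simp; omega⟩
      · obtain ⟨k, hk1, hk⟩ := ih (r - (a - c)) (by omega)
          (List.pairwise_cons.mp hpw).2 (by omega)
        refine ⟨k + 1, by omega, ?_⟩
        simp only [List.take_succ_cons, List.sum_cons, Nat.succ_mul]
        omega

/-- In non-exceptional characteristic, for `1 ≤ t ≤ min(m,n)` and `r ≥ 1`,
the symbolic power `I_t^{(r)}` (the ideal whose standard basis consists of the
standard bitableaux `Σ` with `γ_t(Σ) ≥ r`) equals `Σ_{k ≥ 1} J(k, r + k(t−1))`,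
where `J(k,d)` is the ideal whose standard basis consists of the standard
bitableaux `Σ` with `α_k(Σ) ≥ d`. -/
theorem symbolic_power_eq_sum_Jkd (m n t r : ℕ) (ht1 : 1 ≤ t)
    (ht2 : t ≤ min m n) (hr : 1 ≤ r)
    (hchar : ringChar K = 0 ∨ min m n ≤ ringChar K) :
    (Ideal.span {f | ∃ Δ : Bitab m n, isStd Δ ∧ r ≤ gamB t Δ ∧
        f = bitabPoly K Δ} : Ideal (MvPolynomial (Fin m × Fin n) K)) =
    ⨆ (k : ℕ) (_ : 1 ≤ k),
      Ideal.span {f | ∃ Δ : Bitab m n, isStd Δ ∧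
        r + k * (t - 1) ≤ alB k Δ ∧ f = bitabPoly K Δ} := by
  have hfun : (fun p : Brow m n => p.1.length + 1 - t) =
      (fun a => a - (t - 1)) ∘ (fun p : Brow m n => p.1.length) := by
    funext p; simp [Function.comp]; omega
  apply le_antisymm
  · rw [Ideal.span_le]
    rintro f ⟨Δ, hstd, hg, rfl⟩
    have hpw : (Δ.map (fun p => p.1.length)).Pairwise (· ≥ ·) :=
      List.isChain_iff_pairwise.mp hstd.1.2
    have hgam : r ≤ ((Δ.map (fun p => p.1.length)).map (· - (t - 1))).sum := by
      rw [List.map_map, ← hfun]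
      exact hg
    obtain ⟨k, hk1, hk⟩ := dirB _ r hr hpw hgam
    refine Submodule.mem_iSup_of_mem k (Submodule.mem_iSup_of_mem hk1 ?_)
    exact Ideal.subset_span ⟨Δ, hstd, hk, rfl⟩
  · apply iSup_le; intro k; apply iSup_le; intro hk1
    rw [Ideal.span_le]
    rintro f ⟨Δ, hstd, ha, rfl⟩
    refine Ideal.subset_span ⟨Δ, hstd, ?_, rfl⟩
    have ha' : r + k * (t - 1) ≤ ((Δ.map (fun p => p.1.length)).take k).sum := ha
    have := dirA ht1 (Δ.map (fun p => p.1.length)) hk1 ha'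
    rw [List.map_map, ← hfun] at this
    exact this
end

section
/- For a shape σ = (s_1 ≥ ... ≥ s_w) and integers t, r: γ_t(σ) ≥ r holds if and only if there exists k ≥ 1 such that α_k(σ) ≥ r + k(t−1), where γ_t(σ) = Σ_i (s_i − t + 1)_+ and α_k(σ) = s_1 + ... + s_k (with s_i = 0 for i > w). -/
/-!
For every `k`, termwise `s i ≤ (s i + 1 - t) + (t - 1)` gives
`α_k - k(t-1) ≤ Σ_{i<k} (s_i - t + 1)_+ ≤ γ_t`. Conversely, since `s` is non-increasing the
indices with `s i ≥ t` form an initial segment `{0, …, k-1}`; only these contribute to `γ_t`,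
each contributing exactly `s i - (t - 1)`, so `γ_t = α_k - k(t-1)` for this `k`.
-/

open Finset

section RangeSums

variable {M : Type*} [AddCommMonoid M] {f : ℕ → M} {m n : ℕ}

lemma sum_range_eq_of_forall_ge_eq_zero (hmn : m ≤ n) (hf : ∀ i, m ≤ i → f i = 0) :
    ∑ i ∈ range n, f i = ∑ i ∈ range m, f i :=
  (sum_subset (range_subset_range.2 hmn) fun i _ hi ↦ hf i (by simpa using hi)).symm

lemma sum_range_le_of_forall_ge_eq_zero [PartialOrder M] [CanonicallyOrderedAdd M]
    (hf : ∀ i, n ≤ i → f i = 0) (m : ℕ) :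
    ∑ i ∈ range m, f i ≤ ∑ i ∈ range n, f i :=
  calc ∑ i ∈ range m, f i ≤ ∑ i ∈ range (max m n), f i :=
        sum_le_sum_of_subset (range_subset_range.2 (le_max_left m n))
    _ = ∑ i ∈ range n, f i :=
        sum_range_eq_of_forall_ge_eq_zero (le_max_right m n) hf

end RangeSums

lemma Antitone.exists_lt_iff_le_of_lt {s : ℕ → ℕ} (hs : Antitone s) {w t : ℕ}
    (hw : s w < t) : ∃ k ≤ w, ∀ i, i < k ↔ t ≤ s i := by
  classical
  have hex : ∃ i, s i < t := ⟨w, hw⟩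
  refine ⟨Nat.find hex, Nat.find_min' hex hw, fun i ↦ ⟨fun hi ↦ ?_, fun hi ↦ ?_⟩⟩
  · exact not_lt.1 (Nat.find_min hex hi)
  · by_contra! hki
    exact (hs hki).trans_lt (Nat.find_spec hex) |>.not_ge hi

section Excess

variable (s : ℕ → ℕ) (t k : ℕ)

lemma sum_range_tsub_add_mul_eq :
    ∑ i ∈ range k, (s i + 1 - t) + k * (t - 1) =
      ∑ i ∈ range k, (s i + 1 - t + (t - 1)) := by
  rw [sum_add_distrib, sum_const, card_range, smul_eq_mul]

lemma sum_range_le_sum_range_tsub_add_mul :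
    ∑ i ∈ range k, s i ≤ ∑ i ∈ range k, (s i + 1 - t) + k * (t - 1) := by
  rw [sum_range_tsub_add_mul_eq]
  exact sum_le_sum fun i _ ↦ by omega

variable {s t k}

lemma sum_range_tsub_add_mul_eq_sum_range (ht : 1 ≤ t) (hk : ∀ i < k, t ≤ s i) :
    ∑ i ∈ range k, (s i + 1 - t) + k * (t - 1) = ∑ i ∈ range k, s i := by
  rw [sum_range_tsub_add_mul_eq]
  exact sum_congr rfl fun i hi ↦ by have := hk i (mem_range.1 hi); omega

end Excess

/-- For a shape `σ = (s_1 ≥ s_2 ≥ …)` (non-increasing, vanishing from index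
`w` on) and integers `t, r ≥ 1`: `γ_t(σ) ≥ r` iff there is `k ≥ 1` with
`α_k(σ) ≥ r + k(t−1)`, where `γ_t(σ) = Σ_i (s_i − t + 1)_+` and
`α_k(σ) = s_1 + … + s_k`. -/
theorem gamma_ge_iff_exists_alpha (w t r : ℕ) (ht : 1 ≤ t) (hr : 1 ≤ r)
    (s : ℕ → ℕ) (hmono : ∀ i j, i ≤ j → s j ≤ s i) (hw : ∀ i, w ≤ i → s i = 0) :
    r ≤ ∑ i ∈ Finset.range w, (s i + 1 - t) ↔
    ∃ k, 1 ≤ k ∧ r + k * (t - 1) ≤ ∑ i ∈ Finset.range k, s i := by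
  constructor
  · intro hγ
    obtain ⟨k, hkw, hk⟩ :=
      Antitone.exists_lt_iff_le_of_lt (t := t) (fun i j ↦ hmono i j) (by rw [hw w le_rfl]; omega)
    have hγk : ∑ i ∈ range w, (s i + 1 - t) = ∑ i ∈ range k, (s i + 1 - t) :=
      sum_range_eq_of_forall_ge_eq_zero hkw fun i hi ↦ by
        have := (hk i).not.1 (not_lt.2 hi); omega
    refine ⟨k, Nat.one_le_iff_ne_zero.2 fun hk0 ↦ ?_, ?_⟩
    · simp only [hk0, range_zero, sum_empty] at hγk
      omega
    · rw [← sum_range_tsub_add_mul_eq_sum_range ht fun i ↦ (hk i).1, ← hγk]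
      omega
  · rintro ⟨k, -, hk⟩
    have hexcess := sum_range_le_sum_range_tsub_add_mul s t k
    have hwk : ∑ i ∈ range k, (s i + 1 - t) ≤ ∑ i ∈ range w, (s i + 1 - t) :=
      sum_range_le_of_forall_ge_eq_zero (fun i hi ↦ by simp [hw i hi, ht]) k
    omega
end
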